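/- arXiv:1406.4170 — 2 statements merged into one kernel-verified Lean document; each statement's English description precedes it below -/
import Mathlib

section
/- Let G be a graph with Godsil-McKay switching set X and switched graph G'. The multiset {λ_G(x,y) : x,y ∉ X} of numbers of common neighbors of pairs of vertices outside X is unchanged by switching, i.e., λ_{G'}(x,y) = λ_G(x,y) for all x,y ∉ X. -/
open Finset
open scoped Classical

variable {V : Type*}

/-- `y` has exactly half of the vertices of `X` as neighbours in `G`. -/
def halfIn (G : SimpleGraph V) (X : Finset V) (y : V) : Prop :=
  2 * (X.filter (G.Adj y)).card = X.card

/-- A Godsil-McKay switching set: `X` induces a regular subgraph, and every vertex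
outside `X` has `0`, `|X|/2` or `|X|` neighbours in `X`. -/
def IsGMSwitchingSet (G : SimpleGraph V) (X : Finset V) : Prop :=
  (∃ k, ∀ x ∈ X, (X.filter (G.Adj x)).card = k) ∧
    ∀ y ∉ X, (X.filter (G.Adj y)).card = 0 ∨ halfIn G X y ∨
      (X.filter (G.Adj y)).card = X.card

/-- The graph obtained from `G` by Godsil-McKay switching with respect to `X`:
for each vertex `y ∉ X` having exactly `|X|/2` neighbours in `X`, the edges from `y`
to `X` are replaced by the edges from `y` to the other `|X|/2` vertices of `X`. -/
noncomputable def GMswitch (G : SimpleGraph V) (X : Finset V) : SimpleGraph V where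
  Adj u v :=
    if u ∈ X ↔ v ∈ X then G.Adj u v
    else if halfIn G X (if u ∈ X then v else u) then ¬ G.Adj u v else G.Adj u v
  symm := by
    constructor
    intro u v h
    beta_reduce at h ⊢
    by_cases hm : (u ∈ X ↔ v ∈ X)
    · rw [if_pos hm] at h
      rw [if_pos hm.symm]
      exact h.symm
    · have hm' : ¬ (v ∈ X ↔ u ∈ X) := fun hh => hm hh.symm
      rw [if_neg hm] at h
      rw [if_neg hm']
      have he : (if v ∈ X then u else v) = (if u ∈ X then v else u) := by
        by_cases hu : u ∈ X <;> by_cases hv : v ∈ X <;> simp [hu, hv] at hm ⊢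
      rw [he]
      by_cases hc : halfIn G X (if u ∈ X then v else u)
      · rw [if_pos hc] at h ⊢
        exact fun ha => h ha.symm
      · rw [if_neg hc] at h ⊢
        exact h.symm
  loopless := by
    constructor
    intro u h
    beta_reduce at h
    rw [if_pos Iff.rfl] at h
    exact G.irrefl h

/-- `lam G x y` is the number of common neighbours of `x` and `y` in `G`. -/
noncomputable def lam [Fintype V] (G : SimpleGraph V) (x y : V) : ℕ :=
  (univ.filter fun z => G.Adj x z ∧ G.Adj y z).card

/-!
Switching changes only edges between `X` and its complement, so common neighbours outside `X`
are untouched. Inside `X`, the neighbourhood `A` of a vertex outside `X` is either kept or, when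
`2|A| = |X|`, replaced by `X \ A`. Two halves satisfy `|(X \ A) ∩ (X \ B)| = |X| - |A ∪ B| = |A ∩ B|`,
and a half against `B ∈ {∅, X}` satisfies `|(X \ A) ∩ B| = |A ∩ B|`.
-/

section Counting

variable {α : Type*} [DecidableEq α] {X A B : Finset α}

theorem card_sdiff_inter_sdiff_eq_card_inter (hA : A ⊆ X) (hB : B ⊆ X)
    (hA2 : 2 * #A = #X) (hB2 : 2 * #B = #X) : #((X \ A) ∩ (X \ B)) = #(A ∩ B) := by
  rw [← sdiff_union_distrib, card_sdiff_of_subset (union_subset hA hB)]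
  have := card_union_add_card_inter A B
  omega

theorem card_sdiff_inter_eq_card_inter (hA : A ⊆ X) (hA2 : 2 * #A = #X) (hB : B = ∅ ∨ B = X) :
    #((X \ A) ∩ B) = #(A ∩ B) := by
  rcases hB with rfl | rfl
  · simp
  · rw [inter_eq_left.mpr sdiff_subset, inter_eq_left.mpr hA, card_sdiff_of_subset hA]
    omega

end Counting

section Switching

variable {G : SimpleGraph V} {X : Finset V} {w z : V}

theorem GMswitch_adj_of_notMem_of_notMem (hw : w ∉ X) (hz : z ∉ X) :
    (GMswitch G X).Adj w z ↔ G.Adj w z := by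
  simp [GMswitch, hw, hz]

theorem GMswitch_adj_of_notMem_of_mem (hw : w ∉ X) (hz : z ∈ X) :
    (GMswitch G X).Adj w z ↔ if halfIn G X w then ¬ G.Adj w z else G.Adj w z := by
  simp [GMswitch, hw, hz]

theorem filter_GMswitch_adj_of_notMem (hw : w ∉ X) :
    X.filter ((GMswitch G X).Adj w) =
      if halfIn G X w then X \ X.filter (G.Adj w) else X.filter (G.Adj w) := by
  ext z
  by_cases hz : z ∈ X
  · split_ifs with hh <;> simp [hz, GMswitch_adj_of_notMem_of_mem hw hz, hh]
  · split_ifs <;> simp [hz]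

theorem IsGMSwitchingSet.filter_adj_eq_empty_or_halfIn_or_eq (hX : IsGMSwitchingSet G X)
    (hw : w ∉ X) : X.filter (G.Adj w) = ∅ ∨ halfIn G X w ∨ X.filter (G.Adj w) = X := by
  rcases hX.2 w hw with h | h | h
  · exact .inl (card_eq_zero.mp h)
  · exact .inr (.inl h)
  · exact .inr (.inr (eq_of_subset_of_card_le (filter_subset _ _) h.ge))

theorem IsGMSwitchingSet.card_filter_GMswitch_adj_inter (hX : IsGMSwitchingSet G X) {x y : V}
    (hx : x ∉ X) (hy : y ∉ X) :
    #(X.filter ((GMswitch G X).Adj x) ∩ X.filter ((GMswitch G X).Adj y)) =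
      #(X.filter (G.Adj x) ∩ X.filter (G.Adj y)) := by
  have hsub (w : V) : X.filter (G.Adj w) ⊆ X := filter_subset _ _
  have hflat (w : V) (hw : w ∉ X) (hh : ¬ halfIn G X w) :
      X.filter (G.Adj w) = ∅ ∨ X.filter (G.Adj w) = X :=
    (hX.filter_adj_eq_empty_or_halfIn_or_eq hw).imp_right (Or.resolve_left · hh)
  rw [filter_GMswitch_adj_of_notMem hx, filter_GMswitch_adj_of_notMem hy]
  split_ifs with hxh hyh hyh
  · exact card_sdiff_inter_sdiff_eq_card_inter (hsub x) (hsub y) hxh hyh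
  · exact card_sdiff_inter_eq_card_inter (hsub x) hxh (hflat y hy hyh)
  · rw [inter_comm, card_sdiff_inter_eq_card_inter (hsub y) hyh (hflat x hx hxh), inter_comm]
  · rfl

end Switching

theorem lam_eq_card_filter_inter_add [Fintype V] (H : SimpleGraph V) (X : Finset V) (x y : V) :
    lam H x y = #(X.filter (H.Adj x) ∩ X.filter (H.Adj y)) +
      #(Xᶜ.filter fun z => H.Adj x z ∧ H.Adj y z) := by
  rw [lam, ← card_filter_add_card_filter_not (· ∈ X)]
  congr 2 <;> ext z <;> simp only [mem_filter, mem_inter, mem_univ, mem_compl] <;> tauto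

theorem lam_outside_unchanged_general
    {V : Type*} [Fintype V]
    (G : SimpleGraph V) (X : Finset V) (hX : IsGMSwitchingSet G X) :
    ∀ x ∉ X, ∀ y ∉ X, lam (GMswitch G X) x y = lam G x y := by
  intro x hx y hy
  have houtside : Xᶜ.filter (fun z => (GMswitch G X).Adj x z ∧ (GMswitch G X).Adj y z) =
      Xᶜ.filter (fun z => G.Adj x z ∧ G.Adj y z) := by
    refine filter_congr fun z hz => ?_
    rw [mem_compl] at hz
    rw [GMswitch_adj_of_notMem_of_notMem hx hz, GMswitch_adj_of_notMem_of_notMem hy hz]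
  rw [lam_eq_card_filter_inter_add _ X, lam_eq_card_filter_inter_add _ X,
    hX.card_filter_GMswitch_adj_inter hx hy, houtside]

/-- The number of common neighbours of two vertices outside the switching set is
unchanged by Godsil-McKay switching. -/
theorem lam_outside_unchanged
    {V : Type*} [Fintype V] [DecidableEq V]
    (G : SimpleGraph V) (X : Finset V) (hX : IsGMSwitchingSet G X) :
    ∀ x ∉ X, ∀ y ∉ X, lam (GMswitch G X) x y = lam G x y :=
  lam_outside_unchanged_general G X hX
end

section
/- Let G be a graph with Godsil-McKay switching set X, with adjacency matrix A = [[B, M],[Mᵀ, C]], switched matrix A' = [[B, M'],[M'ᵀ, C]], and let A'' be obtained from A' by additionally complementing the corresponding columns (equivalently, A'' = [[B'', M'],[M'ᵀ, C]] where rows of A indexed by X are switched). Then A''(A'')ᵀ = A'(A')ᵀ; i.e., the matrices A' and A'' have the same Gram matrix of rows. -/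
/-!
With `n = |X|` and `J` the all-ones matrix, `Q = (2/n) J - I` is a symmetric involution, hence
orthogonal. It fixes the all-ones vector and maps every vector with coordinate sum `n/2` to its
complement, so multiplying `A'` on the right by `diag(Q, I)` switches the `X`-columns: it turns
`M'ᵀ = [J-N J O]ᵀ` into `Mᵀ`, and `B` into `J - B` when `B` has row sums `n/2` (while `0 Q = 0`).
Thus `A'' = A' diag(Q, I)` and `A''A''ᵀ = A' diag(Q, I) diag(Q, I)ᵀ A'ᵀ = A'A'ᵀ`.
-/

open Finset Matrix
open scoped Classical

variable {V : Type*}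

/-- The block row `[N J O]` as a single matrix. -/
def rowBlocks {ι κ₁ κ₂ κ₃ : Type*} (N : Matrix ι κ₁ ℝ) :
    Matrix ι (κ₁ ⊕ κ₂ ⊕ κ₃) ℝ :=
  Matrix.of fun x y => Sum.elim (N x) (Sum.elim (fun _ => 1) (fun _ => 0)) y

section

variable {R ι κ ν : Type*}

theorem of_one_mul_of_one [NonAssocSemiring R] [Fintype κ] :
    (of fun _ _ => 1 : Matrix ι κ R) * (of fun _ _ => 1 : Matrix κ ν R) =
      (Fintype.card κ : R) • of fun _ _ => 1 := by
  ext
  simp [mul_apply]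

theorem of_one_mul_eq_of_sum_eq [NonAssocSemiring R] [Fintype ι] {N : Matrix ι κ R} {c : R}
    (hN : ∀ y, ∑ x, N x y = c) :
    (of fun _ _ => 1 : Matrix ν ι R) * N = c • of fun _ _ => 1 := by
  ext
  simp [mul_apply, hN]

theorem mul_transpose_mul_of_mul_transpose_eq_one [CommRing R] [Fintype κ] [Fintype ν]
    [DecidableEq κ] (A : Matrix ι κ R) {Q : Matrix κ ν R} (hQ : Q * Qᵀ = 1) :
    A * Q * (A * Q)ᵀ = A * Aᵀ := by
  rw [transpose_mul, Matrix.mul_assoc, ← Matrix.mul_assoc Q, hQ, Matrix.one_mul]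

theorem mul_rowBlocks {κ₁ κ₂ κ₃ : Type*} [Fintype ι] {P : Matrix ι ι ℝ}
    (hP : ∀ x, ∑ z, P x z = 1) (N : Matrix ι κ₁ ℝ) :
    P * rowBlocks (κ₂ := κ₂) (κ₃ := κ₃) N = rowBlocks (P * N) := by
  ext x (k | k | k) <;> simp [rowBlocks, mul_apply, hP]

/-- The Godsil–McKay switching matrix: `Qᵀ A Q = A'`. -/
def gmReflection (ι R : Type*) [Fintype ι] [DecidableEq ι] [Field R] : Matrix ι ι R :=
  (2 / Fintype.card ι : R) • (of fun _ _ => 1) - 1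

section gmReflection

variable [Fintype ι] [DecidableEq ι] [Field R]

theorem gmReflection_transpose : (gmReflection ι R)ᵀ = gmReflection ι R := by
  ext x y
  simp [gmReflection, one_apply, eq_comm]

theorem gmReflection_mul_self : gmReflection ι R * gmReflection ι R = 1 := by
  have hn : (2 / Fintype.card ι : R) * (2 / Fintype.card ι) * Fintype.card ι
      = 2 * (2 / Fintype.card ι) := by
    rcases eq_or_ne (Fintype.card ι : R) 0 with h | h
    · simp [h]
    · field_simp
  simp only [gmReflection, sub_mul, mul_sub, smul_mul_smul_comm, of_one_mul_of_one, smul_smul,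
    Matrix.mul_one, Matrix.one_mul, hn]
  module

theorem gmReflection_mul_transpose_self :
    gmReflection ι R * (gmReflection ι R)ᵀ = 1 := by
  rw [gmReflection_transpose, gmReflection_mul_self]

variable [CharZero R]

theorem sum_gmReflection_apply (x : ι) : ∑ z, gmReflection ι R x z = 1 := by
  have : Nonempty ι := ⟨x⟩
  have : (Fintype.card ι : R) ≠ 0 := Nat.cast_ne_zero.2 Fintype.card_ne_zero
  simp only [gmReflection, smul_of, Matrix.sub_apply, of_apply, Pi.smul_apply, smul_eq_mul,
    mul_one, one_apply, sum_sub_distrib, sum_const, card_univ, nsmul_eq_mul, sum_ite_eq, mem_univ,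
    ↓reduceIte]
  field_simp
  ring

theorem gmReflection_mul_of_sum_eq {N : Matrix ι κ R}
    (hN : ∀ y, ∑ x, N x y = Fintype.card ι / 2) :
    gmReflection ι R * N = (of fun _ _ => 1) - N := by
  rcases isEmpty_or_nonempty ι
  · exact Subsingleton.elim _ _
  have hn : (2 / Fintype.card ι : R) * (Fintype.card ι / 2) = 1 := by
    have : (Fintype.card ι : R) ≠ 0 := Nat.cast_ne_zero.2 Fintype.card_ne_zero
    field_simp
  rw [gmReflection, Matrix.sub_mul, Matrix.smul_mul, of_one_mul_eq_of_sum_eq hN, smul_smul, hn,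
    one_smul, Matrix.one_mul]

theorem gmReflection_mul_one_sub_of_sum_eq {N : Matrix ι κ R}
    (hN : ∀ y, ∑ x, N x y = Fintype.card ι / 2) :
    gmReflection ι R * ((of fun _ _ => 1) - N) = N := by
  rw [← gmReflection_mul_of_sum_eq hN, ← Matrix.mul_assoc, gmReflection_mul_self, Matrix.one_mul]

theorem mul_gmReflection_of_sum_eq {B : Matrix κ ι R}
    (hB : ∀ x, ∑ y, B x y = Fintype.card ι / 2) :
    B * gmReflection ι R = (of fun _ _ => 1) - B := by
  rw [← transpose_transpose (B * _), transpose_mul, gmReflection_transpose,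
    gmReflection_mul_of_sum_eq (N := Bᵀ) hB, transpose_sub]
  rfl

end gmReflection

end

theorem switched_rows_same_gram_general
    {ι κ₁ κ₂ κ₃ : Type*} [Fintype ι] [Fintype κ₁] [Fintype κ₂] [Fintype κ₃]
    (B Bs : Matrix ι ι ℝ) (C : Matrix (κ₁ ⊕ κ₂ ⊕ κ₃) (κ₁ ⊕ κ₂ ⊕ κ₃) ℝ)
    (N : Matrix ι κ₁ ℝ)
    (hNcol : ∀ y, ∑ x, N x y = (Fintype.card ι : ℝ) / 2)
    (hcase : (B = 0 ∧ Bs = B) ∨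
      ((∀ x, ∑ y, B x y = (Fintype.card ι : ℝ) / 2) ∧
        Bs = Matrix.of (fun _ _ => 1) - B)) :
    Matrix.fromBlocks Bs (rowBlocks (Matrix.of (fun _ _ => 1) - N))
        (rowBlocks (κ₂ := κ₂) (κ₃ := κ₃) N)ᵀ C *
      (Matrix.fromBlocks Bs (rowBlocks (Matrix.of (fun _ _ => 1) - N))
        (rowBlocks (κ₂ := κ₂) (κ₃ := κ₃) N)ᵀ C)ᵀ =
    Matrix.fromBlocks B (rowBlocks (Matrix.of (fun _ _ => 1) - N))
        (rowBlocks (κ₂ := κ₂) (κ₃ := κ₃) (Matrix.of (fun _ _ => 1) - N))ᵀ C *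
      (Matrix.fromBlocks B (rowBlocks (Matrix.of (fun _ _ => 1) - N))
        (rowBlocks (κ₂ := κ₂) (κ₃ := κ₃) (Matrix.of (fun _ _ => 1) - N))ᵀ C)ᵀ := by
  set Q := fromBlocks (gmReflection ι ℝ) 0 0 (1 : Matrix (κ₁ ⊕ κ₂ ⊕ κ₃) (κ₁ ⊕ κ₂ ⊕ κ₃) ℝ)
  have hQ : Q * Qᵀ = 1 := by
    simp [Q, fromBlocks_transpose, fromBlocks_multiply, gmReflection_mul_transpose_self]
  have hB : B * gmReflection ι ℝ = Bs := by
    rcases hcase with ⟨rfl, rfl⟩ | ⟨hBrow, rfl⟩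
    · exact Matrix.zero_mul _
    · exact mul_gmReflection_of_sum_eq hBrow
  have hM : (rowBlocks (κ₂ := κ₂) (κ₃ := κ₃) ((of fun _ _ => 1) - N))ᵀ * gmReflection ι ℝ =
      (rowBlocks N)ᵀ := by
    rw [← gmReflection_transpose, ← transpose_mul, mul_rowBlocks sum_gmReflection_apply,
      gmReflection_mul_one_sub_of_sum_eq hNcol]
  have hA : fromBlocks B (rowBlocks ((of fun _ _ => 1) - N))
      (rowBlocks (κ₂ := κ₂) (κ₃ := κ₃) ((of fun _ _ => 1) - N))ᵀ C * Q =
      fromBlocks Bs (rowBlocks ((of fun _ _ => 1) - N)) (rowBlocks N)ᵀ C := by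
    simp [Q, fromBlocks_multiply, hB, hM]
  rw [← hA, mul_transpose_mul_of_mul_transpose_eq_one _ hQ]

/-- Key identity for Theorem 5: with `A' = [[B,M'],[M'ᵀ,C]]` and `A''` obtained from
`A'` by additionally switching the columns corresponding to `X` (i.e. `A''` is `A` with
its `X`-rows switched), we have `A''(A'')ᵀ = A'(A')ᵀ`.  Here `M = [N J O]`,
`M' = [J-N J O]`, the columns of `N` sum to `|X|/2`, and either `X` is a coclique
(`B = 0`, and the `X`-rows of the `B`-block are unchanged) or `B` has row sums `|X|/2`
(and the `B`-block is complemented as well). -/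
theorem switched_rows_same_gram
    {ι κ₁ κ₂ κ₃ : Type*} [Fintype ι] [Fintype κ₁] [Fintype κ₂] [Fintype κ₃]
    (B Bs : Matrix ι ι ℝ) (C : Matrix (κ₁ ⊕ κ₂ ⊕ κ₃) (κ₁ ⊕ κ₂ ⊕ κ₃) ℝ)
    (N : Matrix ι κ₁ ℝ)
    (hBsym : Bᵀ = B) (hCsym : Cᵀ = C)
    (hN01 : ∀ x y, N x y = 0 ∨ N x y = 1)
    (hNcol : ∀ y, ∑ x, N x y = (Fintype.card ι : ℝ) / 2)
    (hcase : (B = 0 ∧ Bs = B) ∨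
      ((∀ x, ∑ y, B x y = (Fintype.card ι : ℝ) / 2) ∧
        Bs = Matrix.of (fun _ _ => 1) - B)) :
    Matrix.fromBlocks Bs (rowBlocks (Matrix.of (fun _ _ => 1) - N))
        (rowBlocks (κ₂ := κ₂) (κ₃ := κ₃) N)ᵀ C *
      (Matrix.fromBlocks Bs (rowBlocks (Matrix.of (fun _ _ => 1) - N))
        (rowBlocks (κ₂ := κ₂) (κ₃ := κ₃) N)ᵀ C)ᵀ =
    Matrix.fromBlocks B (rowBlocks (Matrix.of (fun _ _ => 1) - N))
        (rowBlocks (κ₂ := κ₂) (κ₃ := κ₃) (Matrix.of (fun _ _ => 1) - N))ᵀ C *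
      (Matrix.fromBlocks B (rowBlocks (Matrix.of (fun _ _ => 1) - N))
        (rowBlocks (κ₂ := κ₂) (κ₃ := κ₃) (Matrix.of (fun _ _ => 1) - N))ᵀ C)ᵀ :=
  switched_rows_same_gram_general B Bs C N hNcol hcase
end
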